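/- arXiv:math-ph/0506001 — 3 statements merged into one kernel-verified Lean document; each statement's English description precedes it below -/
import Mathlib

section
/- Let (a_n)_{n≥0} be a sequence of complex numbers with ∑_{n=0}^{∞} |a_n| < ∞, and let (θ_n)_{n≥0} be any sequence of real numbers. Then for Lebesgue-almost every x ∈ ℝ, the series B^{-1}(x) = ∑_{n=0}^{∞} |a_n|² / sin²((x − θ_n)/2) converges (is finite). -/
open scoped ENNReal

/-!
Truncate each term at `1`. On the period centred at `θ_n`, Jordan's inequality
`|sin (y / 2)| ≥ |y| / π` bounds `min 1 (|a_n|² / sin² ((x - θ_n) / 2))` by a multiple of the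
Cauchy density of scale `π |a_n|`, so its integral over any period is `O(|a_n|)`. Hence the
truncated series has finite integral over every period and is finite almost everywhere. Off the
countable set where some sine vanishes every term is finite, and a finite truncated sum leaves
only finitely many terms `≥ 1`, so the full series converges.
-/

open MeasureTheory ProbabilityTheory Real Set
open scoped NNReal

theorem Function.Periodic.setLIntegral_Ioc_add_eq {f : ℝ → ℝ≥0∞} {T : ℝ}
    (hf : Function.Periodic f T) (hT : 0 < T) (s t : ℝ) :
    ∫⁻ x in Ioc s (s + T), f x = ∫⁻ x in Ioc t (t + T), f x := by
  refine (isAddFundamentalDomain_Ioc hT s).setLIntegral_eq (isAddFundamentalDomain_Ioc hT t) f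
    fun g x => ?_
  obtain ⟨n, hn⟩ := AddSubgroup.mem_zmultiples_iff.1 g.2
  rw [AddSubgroup.vadd_def, vadd_eq_add, ← hn, add_comm]
  exact hf.zsmul n x

theorem ae_lt_top_of_forall_setLIntegral_Ioc_ne_top {f : ℝ → ℝ≥0∞} (hf : AEMeasurable f)
    {T : ℝ} (hT : 0 < T) (h : ∀ t, ∫⁻ x in Ioc t (t + T), f x ≠ ⊤) :
    ∀ᵐ x, f x < ⊤ := by
  rw [← Measure.restrict_univ (μ := volume), ← iUnion_Ioc_add_zsmul hT 0,
    ae_restrict_iUnion_iff]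
  intro n
  rw [add_one_zsmul, ← add_assoc]
  exact ae_lt_top' hf.restrict (h _)

theorem ENNReal.tsum_lt_top_of_tsum_min_one_lt_top {ι : Type*} {f : ι → ℝ≥0∞}
    (h : ∑' i, min 1 (f i) < ⊤) (hf : ∀ i, f i ≠ ⊤) : ∑' i, f i < ⊤ := by
  set S := {i | 1 ≤ f i}
  have hS : S.Finite := by
    simpa [S] using ENNReal.finite_const_le_of_tsum_ne_top h.ne one_ne_zero
  have hle : ∀ i, f i ≤ min 1 (f i) + S.indicator f i := by
    intro i
    by_cases hi : i ∈ S
    · simp [indicator_of_mem hi]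
    · simp only [indicator_of_notMem hi, add_zero]
      exact (min_eq_right (not_le.1 hi).le).ge
  calc ∑' i, f i ≤ ∑' i, (min 1 (f i) + S.indicator f i) := ENNReal.tsum_le_tsum hle
    _ = ∑' i, min 1 (f i) + ∑' i, S.indicator f i := ENNReal.tsum_add
    _ < ⊤ := by
      refine ENNReal.add_lt_top.2 ⟨h, ?_⟩
      rw [tsum_eq_sum (s := hS.toFinset) fun i hi => indicator_of_notMem (by simpa using hi) _]
      exact ENNReal.sum_lt_top.2 fun i _ => (indicator_le_self S f i).trans_lt (hf i).lt_top

theorem sq_le_pi_sq_mul_sin_half_sq {y : ℝ} (hy : |y| ≤ π) : y ^ 2 ≤ π ^ 2 * sin (y / 2) ^ 2 := by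
  have h := mul_abs_le_abs_sin (x := y / 2) (by rw [abs_div, abs_two]; linarith)
  rw [abs_div, abs_two, show 2 / π * (|y| / 2) = |y| / π by field_simp, div_le_iff₀ pi_pos] at h
  calc y ^ 2 = |y| ^ 2 := (sq_abs y).symm
    _ ≤ (|sin (y / 2)| * π) ^ 2 := by gcongr
    _ = π ^ 2 * sin (y / 2) ^ 2 := by rw [mul_pow, sq_abs, mul_comm]

theorem min_one_div_sq_le_cauchyPDF (x₀ : ℝ) (γ : ℝ≥0) (x : ℝ) :
    min 1 (ENNReal.ofReal ((γ : ℝ) ^ 2) / ENNReal.ofReal ((x - x₀) ^ 2)) ≤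
      ENNReal.ofReal (2 * π * γ) * cauchyPDF x₀ γ x := by
  rcases eq_or_ne γ 0 with rfl | hγ
  · simp
  have hγpos : (0 : ℝ) < γ := by positivity
  rw [cauchyPDF, ← ENNReal.ofReal_mul (by positivity), cauchyPDFReal]
  set d := (x - x₀) ^ 2
  have hrhs : 2 * π * γ * (π⁻¹ * γ * (d + γ ^ 2)⁻¹) = 2 * γ ^ 2 / (d + γ ^ 2) := by
    field_simp
  rw [hrhs]
  rcases le_or_gt d (γ ^ 2) with hdγ | hdγ
  · refine (min_le_left _ _).trans ?_
    rw [← ENNReal.ofReal_one]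
    refine ENNReal.ofReal_le_ofReal ?_
    rw [le_div_iff₀ (by positivity)]
    linarith
  · refine (min_le_right _ _).trans ?_
    have hdpos : 0 < d := lt_of_le_of_lt (sq_nonneg _) hdγ
    rw [← ENNReal.ofReal_div_of_pos hdpos]
    refine ENNReal.ofReal_le_ofReal ?_
    rw [div_le_div_iff₀ hdpos (by positivity)]
    nlinarith

theorem lintegral_min_one_div_sq_le (x₀ : ℝ) (γ : ℝ≥0) :
    ∫⁻ x, min 1 (ENNReal.ofReal ((γ : ℝ) ^ 2) / ENNReal.ofReal ((x - x₀) ^ 2)) ≤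
      ENNReal.ofReal (2 * π * γ) :=
  calc _ ≤ ∫⁻ x, ENNReal.ofReal (2 * π * γ) * cauchyPDF x₀ γ x :=
        lintegral_mono (min_one_div_sq_le_cauchyPDF x₀ γ)
    _ = ENNReal.ofReal (2 * π * γ) * ∫⁻ x, cauchyPDF x₀ γ x :=
        lintegral_const_mul _ (measurable_cauchyPDF x₀ γ)
    _ ≤ ENNReal.ofReal (2 * π * γ) := by
      rcases eq_or_ne γ 0 with rfl | hγ
      · simp
      · rw [lintegral_cauchyPDF_eq_one x₀ hγ, mul_one]

theorem periodic_sin_half_sub_sq (θ : ℝ) :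
    Function.Periodic (fun x => sin ((x - θ) / 2) ^ 2) (2 * π) := fun x => by
  simp only [show (x + 2 * π - θ) / 2 = (x - θ) / 2 + π by ring, sin_add_pi, neg_sq]

theorem ofReal_div_sin_half_sq_le {c y : ℝ} (hy : |y| ≤ π) :
    ENNReal.ofReal (c ^ 2) / ENNReal.ofReal (sin (y / 2) ^ 2) ≤
      ENNReal.ofReal ((π * c) ^ 2) / ENNReal.ofReal (y ^ 2) := by
  have hπ : ENNReal.ofReal (π ^ 2) ≠ 0 := by simp [pi_ne_zero]
  rw [← ENNReal.mul_div_mul_left _ _ hπ ENNReal.ofReal_ne_top, ← ENNReal.ofReal_mul (by positivity),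
    ← ENNReal.ofReal_mul (by positivity), ← mul_pow]
  exact ENNReal.div_le_div_left (ENNReal.ofReal_le_ofReal (sq_le_pi_sq_mul_sin_half_sq hy)) _

theorem setLIntegral_Ioc_min_one_div_sin_sq_le (L θ : ℝ) {c : ℝ} (hc : 0 ≤ c) :
    ∫⁻ x in Ioc L (L + 2 * π),
        min 1 (ENNReal.ofReal (c ^ 2) / ENNReal.ofReal (sin ((x - θ) / 2) ^ 2)) ≤
      ENNReal.ofReal (2 * π ^ 2 * c) := by
  set γ : ℝ≥0 := ⟨π * c, by positivity⟩
  have hperiodic := (periodic_sin_half_sub_sq θ).comp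
    fun s => min 1 (ENNReal.ofReal (c ^ 2) / ENNReal.ofReal s)
  refine (hperiodic.setLIntegral_Ioc_add_eq two_pi_pos L (θ - π)).trans_le ?_
  calc _ ≤ ∫⁻ x in Ioc (θ - π) (θ - π + 2 * π),
          min 1 (ENNReal.ofReal ((γ : ℝ) ^ 2) / ENNReal.ofReal ((x - θ) ^ 2)) := by
        refine setLIntegral_mono' measurableSet_Ioc fun x hx => min_le_min le_rfl ?_
        exact ofReal_div_sin_half_sq_le (abs_le.2 ⟨by linarith [hx.1], by linarith [hx.2]⟩)
    _ ≤ ∫⁻ x, min 1 (ENNReal.ofReal ((γ : ℝ) ^ 2) / ENNReal.ofReal ((x - θ) ^ 2)) :=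
        setLIntegral_le_lintegral _ _
    _ ≤ ENNReal.ofReal (2 * π * γ) := lintegral_min_one_div_sq_le θ γ
    _ = ENNReal.ofReal (2 * π ^ 2 * c) := by
        rw [show (γ : ℝ) = π * c from rfl]
        ring_nf

theorem ae_sin_half_sub_ne_zero (θ : ℝ) : ∀ᵐ x, sin ((x - θ) / 2) ≠ 0 := by
  filter_upwards [(countable_range fun k : ℤ => θ + 2 * (k * π)).ae_notMem volume] with x hx hsin
  obtain ⟨k, hk⟩ := sin_eq_zero_iff.1 hsin
  exact hx ⟨k, by linarith⟩

/-- The sum is taken in `ℝ≥0∞`, where `c / 0 = ∞` for `c ≠ 0` and `0 / 0 = 0`: this realises the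
convention for vanishing denominators. -/
theorem Binv_finite_ae_of_l1
    (a : ℕ → ℂ) (θ : ℕ → ℝ) (ha : Summable fun n => ‖a n‖) :
    ∀ᵐ x : ℝ ∂MeasureTheory.volume,
      (∑' n : ℕ, ENNReal.ofReal (‖a n‖ ^ 2) /
        ENNReal.ofReal (Real.sin ((x - θ n) / 2) ^ 2)) < ⊤ := by
  set T : ℕ → ℝ → ℝ≥0∞ := fun n x =>
    ENNReal.ofReal (‖a n‖ ^ 2) / ENNReal.ofReal (sin ((x - θ n) / 2) ^ 2)
  have hT : ∀ n, Measurable fun x => min 1 (T n x) := fun n => by fun_prop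
  have htruncated : ∀ᵐ x, ∑' n, min 1 (T n x) < ⊤ := by
    refine ae_lt_top_of_forall_setLIntegral_Ioc_ne_top
      (Measurable.tsum hT).aemeasurable two_pi_pos fun L => ?_
    rw [lintegral_tsum fun n => (hT n).aemeasurable]
    refine ne_top_of_le_ne_top ?_ (ENNReal.tsum_le_tsum fun n =>
      setLIntegral_Ioc_min_one_div_sin_sq_le L (θ n) (norm_nonneg (a n)))
    rw [← ENNReal.ofReal_tsum_of_nonneg (fun n => by positivity) (ha.mul_left _)]
    exact ENNReal.ofReal_ne_top
  have hsin : ∀ᵐ x, ∀ n, sin ((x - θ n) / 2) ≠ 0 :=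
    ae_all_iff.2 fun n => ae_sin_half_sub_ne_zero (θ n)
  filter_upwards [htruncated, hsin] with x hx hsinx
  exact ENNReal.tsum_lt_top_of_tsum_min_one_lt_top hx fun n =>
    ENNReal.div_ne_top ENNReal.ofReal_ne_top (by simpa [sq_pos_iff] using hsinx n)
end

section
/- Let β be an irrational real number of finite type η = 1, let 1/2 < γ < 1, and let x ∈ (0, 2π). Then the set S(x) = { n ≥ 1 : |x − 2π{nβ}| ≤ 2π n^{−γ} } is infinite. -/
/-!
Write `x = 2πt` with `0 < t < 1` and take a good rational approximation `|β - p/q| < 1/q²` with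
`q` large. As `p` is invertible mod `q`, each residue `0 < K < q` is `n p mod q` for some
`0 < n < q`, and then `{nβ}` lies within `1/q` of `K/q`. The `N` residues
`K = ⌈tq⌉, …, ⌈tq⌉ + N - 1` give `N` distinct `n < q` with `|t - {nβ}| < (N + 1)/q`, which is at
most `q^{-γ} ≤ n^{-γ}` once `q^{1-γ} ≥ N + 1`. Since `N` is arbitrary, the set is infinite.
-/

/-- `⟨z⟩`: the distance from `z` to the nearest integer. -/
noncomputable def nint (z : ℝ) : ℝ := min (Int.fract z) (1 - Int.fract z)

/-- `β` is an irrational of finite type `η`: `η` is the supremum of all `τ` such that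
`liminf_{q→∞} q^τ ⟨qβ⟩ = 0`. -/
def IsFiniteType (β η : ℝ) : Prop :=
  IsLUB {τ : ℝ | Filter.liminf (fun q : ℕ => (q : ℝ) ^ τ * nint ((q : ℝ) * β)) Filter.atTop = 0} η

open Real Set Filter

lemma Set.infinite_of_forall_exists_injOn_range {α : Type*} {s : Set α}
    (h : ∀ N : ℕ, ∃ f : ℕ → α, InjOn f (Finset.range N) ∧ ∀ j < N, f j ∈ s) : s.Infinite := by
  intro hs
  obtain ⟨f, hf_inj, hf_mem⟩ := h (hs.toFinset.card + 1)
  have := Finset.card_le_card_of_injOn f (t := hs.toFinset)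
    (fun j hj => hs.mem_toFinset.mpr (hf_mem j (Finset.mem_range.mp hj))) hf_inj
  simp at this

lemma Irrational.exists_rat_abs_sub_lt_one_div_den_sq_of_lt_den {ξ : ℝ} (hξ : Irrational ξ)
    (M : ℕ) : ∃ r : ℚ, M < r.den ∧ |ξ - r| < 1 / (r.den : ℝ) ^ 2 := by
  obtain ⟨ε, hε, hε_pos : 0 < ε⟩ := ((hξ.eventually_forall_le_dist_cast_rat_of_den_le M).filter_mono
    nhdsWithin_le_nhds |>.and (self_mem_nhdsWithin (s := Ioi 0))).exists
  obtain ⟨q, hq⟩ : ∃ q : ℚ, |ξ - q| < ε := by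
    obtain ⟨q, hq_lower, hq_upper⟩ := exists_rat_btwn (sub_lt_self ξ hε_pos)
    exact ⟨q, abs_sub_lt_iff.mpr ⟨by linarith, by linarith⟩⟩
  obtain ⟨r, hr, hrq⟩ := Real.exists_rat_abs_sub_lt_and_lt_of_irrational hξ q
  refine ⟨r, not_le.mp fun hle => ?_, hr⟩
  exact (hε r hle).not_gt (by rw [Real.dist_eq]; exact hrq.trans hq)

lemma Rat.exists_lt_den_mul_num_modEq (r : ℚ) (K : ℤ) :
    ∃ n : ℕ, n < r.den ∧ (n : ℤ) * r.num ≡ K [ZMOD r.den] := by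
  obtain ⟨a, b, hab⟩ := r.isCoprime_num_den
  have hden : (0 : ℤ) < r.den := by exact_mod_cast r.pos
  have hnonneg := Int.emod_nonneg (a * K) hden.ne'
  refine ⟨(a * K % r.den).toNat, by have := Int.emod_lt_of_pos (a * K) hden; omega, ?_⟩
  rw [Int.toNat_of_nonneg hnonneg]
  calc a * K % r.den * r.num ≡ a * K * r.num [ZMOD r.den] := (Int.mod_modEq _ _).mul_right _
    _ = K + r.den * (-(b * K)) := by linear_combination K * hab
    _ ≡ K [ZMOD r.den] := Int.modEq_add_fac_self

lemma Rat.pos_of_natCast_mul_num_modEq {r : ℚ} {n : ℕ} {K : ℤ}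
    (hK : (n : ℤ) * r.num ≡ K [ZMOD r.den]) (hK0 : 0 < K) (hKq : K < r.den) : 0 < n := by
  refine Nat.pos_of_ne_zero fun hn => ?_
  rw [hn, Int.ModEq, Int.emod_eq_of_lt hK0.le hKq] at hK
  simp [hK0.ne] at hK

lemma abs_fract_mul_sub_div_den_lt {ξ : ℝ} {r : ℚ} (hr : |ξ - r| < 1 / (r.den : ℝ) ^ 2) {n : ℕ}
    (hn : n ≤ r.den) {K : ℤ} (hK : (n : ℤ) * r.num ≡ K [ZMOD r.den]) (hK0 : 0 < K)
    (hKq : K < r.den) : |Int.fract (n * ξ) - K / r.den| < 1 / r.den := by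
  have hq : (0 : ℝ) < r.den := by exact_mod_cast r.pos
  obtain ⟨m, hm⟩ := Int.modEq_iff_dvd.mp hK.symm
  have hnr : (n : ℝ) * r = m + K / r.den := by
    rw [Rat.cast_def]
    field_simp
    exact_mod_cast (by linear_combination hm : (n : ℤ) * r.num = r.den * m + K)
  set ε := (n : ℝ) * (ξ - r)
  have hε : |ε| < 1 / r.den :=
    calc |ε| = n * |ξ - r| := by rw [abs_mul, Nat.abs_cast]
      _ ≤ r.den * |ξ - r| := by gcongr
      _ < r.den * (1 / (r.den : ℝ) ^ 2) := by gcongr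
      _ = 1 / r.den := by field_simp
  have hK_lower : 1 / (r.den : ℝ) ≤ K / r.den := by gcongr; exact_mod_cast hK0
  have hK_upper : K / (r.den : ℝ) + 1 / r.den ≤ 1 := by
    rw [← add_div, div_le_one hq]; exact_mod_cast hKq
  have hfract : Int.fract (n * ξ) = K / r.den + ε := by
    rw [show (n : ℝ) * ξ = m + (K / r.den + ε) by simp only [ε]; linear_combination hnr,
      Int.fract_intCast_add, Int.fract_eq_self]
    constructor <;> linarith [abs_lt.mp hε]
  rwa [hfract, add_sub_cancel_left]

lemma abs_sub_ceil_mul_add_div_le (t : ℝ) {q : ℝ} (hq : 0 < q) {j N : ℕ} (hj : j < N) :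
    |t - (⌈t * q⌉ + j) / q| ≤ N / q := by
  have hjN : (j : ℝ) + 1 ≤ N := by exact_mod_cast hj
  rw [show t - (⌈t * q⌉ + j) / q = (t * q - (⌈t * q⌉ + j)) / q by field_simp, abs_div,
    abs_of_pos hq, div_le_div_iff_of_pos_right hq, abs_le]
  constructor <;> linarith [Int.le_ceil (t * q), Int.ceil_lt_add_one (t * q)]

lemma abs_sub_fract_mul_le_rpow_neg {ξ : ℝ} {r : ℚ} (hr : |ξ - r| < 1 / (r.den : ℝ) ^ 2) {n : ℕ}
    (hn : n < r.den) {K : ℤ} (hK : (n : ℤ) * r.num ≡ K [ZMOD r.den]) (hK0 : 0 < K)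
    (hKq : K < r.den) {t : ℝ} {N : ℕ} (ht : |t - K / r.den| ≤ N / r.den) {γ : ℝ} (hγ : 0 ≤ γ)
    (h_pow : (N : ℝ) + 1 ≤ (r.den : ℝ) ^ (1 - γ)) :
    |t - Int.fract (n * ξ)| ≤ (n : ℝ) ^ (-γ) := by
  have hq : (0 : ℝ) < r.den := by exact_mod_cast r.pos
  have h_fract := abs_fract_mul_sub_div_den_lt hr hn.le hK hK0 hKq
  calc |t - Int.fract (n * ξ)|
      ≤ |t - K / r.den| + |K / r.den - Int.fract (n * ξ)| := abs_sub_le _ _ _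
    _ ≤ N / r.den + 1 / r.den := add_le_add ht (by rw [abs_sub_comm]; exact h_fract.le)
    _ = (N + 1) / r.den := by ring
    _ ≤ (r.den : ℝ) ^ (-γ) := by
      rwa [div_le_iff₀ hq, ← Real.rpow_add_one hq.ne', neg_add_eq_sub]
    _ ≤ (n : ℝ) ^ (-γ) := Real.rpow_le_rpow_of_nonpos
      (by exact_mod_cast Rat.pos_of_natCast_mul_num_modEq hK hK0 hKq)
      (by exact_mod_cast hn.le) (neg_nonpos.mpr hγ)

lemma infinite_setOf_abs_sub_fract_mul_le_rpow_neg {β : ℝ} (hβ : Irrational β) {γ : ℝ}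
    (hγ0 : 0 ≤ γ) (hγ1 : γ < 1) {t : ℝ} (ht : t ∈ Ioo 0 1) :
    {n : ℕ | 1 ≤ n ∧ |t - Int.fract (n * β)| ≤ (n : ℝ) ^ (-γ)}.Infinite := by
  refine Set.infinite_of_forall_exists_injOn_range fun N => ?_
  obtain ⟨M, hM⟩ := eventually_atTop.mp
    (((tendsto_natCast_atTop_atTop.const_mul_atTop (sub_pos.mpr ht.2)).eventually_ge_atTop
      (N : ℝ)).and (((tendsto_rpow_atTop (sub_pos.mpr hγ1)).comp
        tendsto_natCast_atTop_atTop).eventually_ge_atTop ((N : ℝ) + 1)))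
  obtain ⟨r, hMr, hr⟩ := hβ.exists_rat_abs_sub_lt_one_div_den_sq_of_lt_den M
  obtain ⟨h_room, h_pow⟩ := hM r.den hMr.le
  have hq : (0 : ℝ) < r.den := by exact_mod_cast r.pos
  choose n hn_lt hn_mod using r.exists_lt_den_mul_num_modEq
  set K : ℕ → ℤ := fun j => ⌈t * r.den⌉ + j
  have hK_pos (j : ℕ) : 0 < K j := by
    have := Int.ceil_pos.mpr (mul_pos ht.1 hq)
    simp only [K]; omega
  have hK_lt {j : ℕ} (hj : j < N) : K j < r.den := by
    have hjN : (j : ℝ) + 1 ≤ N := by exact_mod_cast hj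
    have : (K j : ℝ) < r.den := by
      simp only [K, Int.cast_add, Int.cast_natCast]
      linarith [Int.ceil_lt_add_one (t * r.den)]
    exact_mod_cast this
  refine ⟨fun j => n (K j), fun i hi j hj hij => ?_, fun j hj => ?_⟩
  · have hK : K i % r.den = K j % r.den := by
      have := hn_mod (K j)
      rw [← show n (K i) = n (K j) from hij] at this
      exact (hn_mod (K i)).symm.trans this
    rw [Int.emod_eq_of_lt (hK_pos i).le (hK_lt (Finset.mem_range.mp hi)),
      Int.emod_eq_of_lt (hK_pos j).le (hK_lt (Finset.mem_range.mp hj))] at hK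
    simpa [K] using hK
  refine ⟨Rat.pos_of_natCast_mul_num_modEq (hn_mod (K j)) (hK_pos j) (hK_lt hj), ?_⟩
  refine abs_sub_fract_mul_le_rpow_neg hr (hn_lt _) (hn_mod _) (hK_pos j) (hK_lt hj) ?_ hγ0 h_pow
  simpa [K] using abs_sub_ceil_mul_add_div_le t hq hj

theorem S_infinite_harmonic_oscillator_general
    (β : ℝ) (hβ : Irrational β)
    (γ : ℝ) (hγ1 : 1 / 2 < γ) (hγ2 : γ < 1)
    (x : ℝ) (hx : x ∈ Set.Ioo 0 (2 * Real.pi)) :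
    {n : ℕ | 1 ≤ n ∧
      |x - 2 * Real.pi * Int.fract ((n : ℝ) * β)| ≤ 2 * Real.pi * (n : ℝ) ^ (-γ)}.Infinite := by
  have hπ : 0 < 2 * π := by positivity
  have ht : x / (2 * π) ∈ Ioo 0 1 := ⟨div_pos hx.1 hπ, (div_lt_one hπ).mpr hx.2⟩
  refine (infinite_setOf_abs_sub_fract_mul_le_rpow_neg hβ (by linarith) hγ2 ht).mono ?_
  rintro n ⟨hn, h_near⟩
  refine ⟨hn, ?_⟩
  calc |x - 2 * π * Int.fract (n * β)| = 2 * π * |x / (2 * π) - Int.fract (n * β)| := by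
        rw [← abs_of_pos hπ, ← abs_mul, abs_of_pos hπ, mul_sub, mul_div_cancel₀ _ hπ.ne']
    _ ≤ 2 * π * (n : ℝ) ^ (-γ) := by gcongr

/-- Kicked harmonic oscillator: for `β` irrational of type `η = 1`, `1/2 < γ < 1` and
`x ∈ (0, 2π)`, the set `S(x) = {n ≥ 1 : |x − 2π{nβ}| ≤ 2π n^{−γ}}` is infinite. -/
theorem S_infinite_harmonic_oscillator
    (β : ℝ) (hβ : Irrational β) (htype : IsFiniteType β 1)
    (γ : ℝ) (hγ1 : 1 / 2 < γ) (hγ2 : γ < 1)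
    (x : ℝ) (hx : x ∈ Set.Ioo 0 (2 * Real.pi)) :
    {n : ℕ | 1 ≤ n ∧
      |x - 2 * Real.pi * Int.fract ((n : ℝ) * β)| ≤ 2 * Real.pi * (n : ℝ) ^ (-γ)}.Infinite :=
  S_infinite_harmonic_oscillator_general β hβ γ hγ1 hγ2 x hx
end

section
/- Let j be a positive integer and let β be an irrational real number of finite type η. Assume that for every ε > 0 the discrepancy of the sequence ω_j = ({n^j β})_{n≥1} satisfies D_N(ω_j) = O(N^{−1/(ηj)+ε}). Let 1/2 < γ < 1/2 + 1/(2ηj) and let x ∈ (0, 2π). Then the counting function A_N = #{ n : 1 ≤ n ≤ N and |x/(2π) − {n^j β}| ≤ N^{1−2γ} (log N)^{−1/2} } tends to infinity as N → ∞. -/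
/-- `A([a,b),N)`: the number of indices `1 ≤ n ≤ N` with `x n ∈ [a,b)`. -/
noncomputable def countIn (x : ℕ → ℝ) (a b : ℝ) (N : ℕ) : ℕ :=
  Nat.card {n : ℕ | 1 ≤ n ∧ n ≤ N ∧ x n ∈ Set.Ico a b}

/-- The discrepancy `D_N` of the sequence `x` (whose terms are assumed to lie in `[0,1)`). -/
noncomputable def disc (x : ℕ → ℝ) (N : ℕ) : ℝ :=
  sSup {d : ℝ | ∃ a b : ℝ, 0 ≤ a ∧ a < b ∧ b ≤ 1 ∧
    d = |(countIn x a b N : ℝ) / (N : ℝ) - (b - a)|}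

lemma finite_aux (N : ℕ) (P : ℕ → Prop) : {n : ℕ | 1 ≤ n ∧ n ≤ N ∧ P n}.Finite :=
  (Set.finite_Icc 1 N).subset fun n hn => ⟨hn.1, hn.2.1⟩

lemma countIn_le (x : ℕ → ℝ) (a b : ℝ) (N : ℕ) : countIn x a b N ≤ N := by
  have h := Nat.card_mono (Set.finite_Icc 1 N)
    (show {n : ℕ | 1 ≤ n ∧ n ≤ N ∧ x n ∈ Set.Ico a b} ⊆ Set.Icc 1 N from fun n hn => ⟨hn.1, hn.2.1⟩)
  have h2 : Nat.card (Set.Icc 1 N) = N := by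
    rw [← Finset.coe_Icc, Nat.card_coe_set_eq, Set.ncard_coe_finset, Nat.card_Icc]; omega
  rw [h2] at h
  exact h

lemma disc_bddAbove (x : ℕ → ℝ) (N : ℕ) : BddAbove {d : ℝ | ∃ a b : ℝ, 0 ≤ a ∧ a < b ∧ b ≤ 1 ∧
    d = |(countIn x a b N : ℝ) / (N : ℝ) - (b - a)|} := by
  refine ⟨2, fun d hd => ?_⟩
  obtain ⟨a, b, ha, hab, hb, rfl⟩ := hd
  have h1 : (0:ℝ) ≤ (countIn x a b N : ℝ) / N := by positivity
  have h2 : (countIn x a b N : ℝ) / N ≤ 1 := by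
    rcases Nat.eq_zero_or_pos N with h | h
    · simp [h]
    · rw [div_le_one (by exact_mod_cast h)]
      exact_mod_cast countIn_le x a b N
  rw [abs_sub_le_iff]
  constructor <;> linarith

lemma abs_le_disc (x : ℕ → ℝ) (N : ℕ) {a b : ℝ} (ha : 0 ≤ a) (hab : a < b) (hb : b ≤ 1) :
    |(countIn x a b N : ℝ) / (N : ℝ) - (b - a)| ≤ disc x N :=
  le_csSup (disc_bddAbove x N) ⟨a, b, ha, hab, hb, rfl⟩

lemma one_div_le_disc (x : ℕ → ℝ) (h0 : 0 ≤ x 1) (h1 : x 1 < 1) (N : ℕ) (hN : 0 < N) :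
    1 / (2 * (N : ℝ)) ≤ disc x N := by
  have hNR : (0:ℝ) < N := by exact_mod_cast hN
  set a : ℝ := x 1 with ha_def
  set b : ℝ := min (x 1 + 1 / (2 * (N : ℝ))) 1 with hb_def
  have hab : a < b := lt_min (lt_add_of_pos_right _ (by positivity)) h1
  have hb1 : b ≤ 1 := min_le_right _ _
  have hlen : b - a ≤ 1 / (2 * (N : ℝ)) := by
    have := min_le_left (x 1 + 1 / (2 * (N : ℝ))) 1
    simp only [hb_def, ha_def]; linarith
  have hmem : (1 : ℕ) ∈ {n : ℕ | 1 ≤ n ∧ n ≤ N ∧ x n ∈ Set.Ico a b} :=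
    ⟨le_refl 1, hN, le_refl a, hab⟩
  have hcount : 1 ≤ countIn x a b N := by
    haveI : Finite {n : ℕ | 1 ≤ n ∧ n ≤ N ∧ x n ∈ Set.Ico a b} :=
      (finite_aux N _).to_subtype
    haveI : Nonempty {n : ℕ | 1 ≤ n ∧ n ≤ N ∧ x n ∈ Set.Ico a b} := ⟨⟨1, hmem⟩⟩
    exact Nat.card_pos
  have hcR : (1:ℝ) / N ≤ (countIn x a b N : ℝ) / N := by
    gcongr
    exact_mod_cast hcount
  have key := abs_le_disc x N h0 hab hb1
  have habs : (countIn x a b N : ℝ) / N - (b - a) ≤ |(countIn x a b N : ℝ) / N - (b - a)| :=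
    le_abs_self _
  have h1N : 1 / (2 * (N:ℝ)) = 1 / N - 1 / (2 * N) := by field_simp; ring
  linarith

set_option maxHeartbeats 2000000 in
/-- Assuming the discrepancy bound `D_N(ω_j) = O(N^{−1/(ηj)+ε})` for every `ε > 0`, for
`1/2 < γ < 1/2 + 1/(2ηj)` and `x ∈ (0,2π)`, the counting function
`A_N = #{1 ≤ n ≤ N : |x/(2π) − {n^j β}| ≤ N^{1−2γ}(log N)^{−1/2}}` tends to infinity. -/
theorem counting_tendsto_atTop_of_discrepancy_bound
    (j : ℕ) (hj : 0 < j) (β η : ℝ) (hβ : Irrational β) (hη : 0 < η)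
    (htype : IsFiniteType β η)
    (hdisc : ∀ ε : ℝ, 0 < ε → ∃ C : ℝ, 0 < C ∧ ∀ N : ℕ, 0 < N →
      disc (fun n => Int.fract ((n : ℝ) ^ j * β)) N ≤
        C * (N : ℝ) ^ (-(1 / (η * (j : ℝ))) + ε))
    (γ : ℝ) (hγ1 : 1 / 2 < γ) (hγ2 : γ < 1 / 2 + 1 / (2 * η * (j : ℝ)))
    (x : ℝ) (hx : x ∈ Set.Ioo 0 (2 * Real.pi)) :
    Filter.Tendsto
      (fun N : ℕ => Nat.card {n : ℕ | 1 ≤ n ∧ n ≤ N ∧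
        |x / (2 * Real.pi) - Int.fract ((n : ℝ) ^ j * β)| ≤
          (N : ℝ) ^ (1 - 2 * γ) * Real.log N ^ (-(1 / 2) : ℝ)})
      Filter.atTop Filter.atTop := by
  have hjR : (0:ℝ) < j := by exact_mod_cast hj
  have hηj : (0:ℝ) < η * j := mul_pos hη hjR
  set θ : ℝ := 1 / (η * (j:ℝ)) with hθdef
  have hθpos : 0 < θ := by positivity
  have h2ηj : 1 / (2 * η * (j:ℝ)) = θ / 2 := by
    rw [hθdef, show (2 * η * (j:ℝ)) = η * j * 2 by ring, ← div_div]
  rw [h2ηj] at hγ2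
  by_cases hγ : γ < 1
  · -- main case
    set c : ℝ := x / (2 * Real.pi) with hc_def
    have hπ : (0:ℝ) < 2 * Real.pi := by positivity
    have hc0 : 0 < c := div_pos hx.1 hπ
    have hc1 : c < 1 := (div_lt_one hπ).2 hx.2
    have hmin : 0 < min c (1 - c) := lt_min hc0 (by linarith)
    set a : ℝ := 2 - 2 * γ with ha_def
    have hapos : 0 < a := by rw [ha_def]; linarith
    have hγθ : 1 - θ < a := by rw [ha_def]; linarith
    set ε : ℝ := (a - (1 - θ)) / 2 with hε_def
    have hεpos : 0 < ε := by rw [hε_def]; linarith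
    obtain ⟨C, hC, hbound⟩ := hdisc ε hεpos
    set b : ℝ := 1 - θ + ε with hb_def
    have hba : b < a := by rw [hb_def, hε_def]; linarith
    set r : ℝ := min a (a - b) / 2 with hr_def
    have hrpos : 0 < r := by
      rw [hr_def]
      exact div_pos (lt_min hapos (by linarith)) two_pos
    have hrab : r ≤ (a - b) / 2 := by rw [hr_def]; gcongr; exact min_le_right _ _
    have hra : r ≤ a / 2 := by rw [hr_def]; gcongr; exact min_le_left _ _
    have harb : b < a - r := by linarith
    have harpos : 0 < a - r := by linarith
    rw [Filter.tendsto_atTop]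
    intro m
    have E1 : ∀ᶠ N : ℕ in Filter.atTop, 3 ≤ N := Filter.eventually_ge_atTop 3
    have E2 : ∀ᶠ N : ℕ in Filter.atTop, (N:ℝ) ^ (1 - 2*γ) < min c (1 - c) := by
      have t : Filter.Tendsto (fun N : ℕ => (N:ℝ) ^ (1 - 2*γ)) Filter.atTop (nhds 0) := by
        have h := (tendsto_rpow_neg_atTop (y := 2*γ - 1) (by linarith)).comp
          tendsto_natCast_atTop_atTop
        have he : (1 - 2*γ) = -(2*γ - 1) := by ring
        rw [he]
        exact h
      exact t.eventually_lt_const hmin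
    have E3 : ∀ᶠ N : ℕ in Filter.atTop, Real.log N ≤ (N:ℝ) ^ (2*r) := by
      have o := isLittleO_log_rpow_atTop (show (0:ℝ) < 2*r by positivity)
      have h := tendsto_natCast_atTop_atTop.eventually (o.def one_pos)
      filter_upwards [h] with N hN
      rw [Real.norm_eq_abs, Real.norm_eq_abs, one_mul,
        abs_of_nonneg (Real.rpow_nonneg (Nat.cast_nonneg N) _)] at hN
      exact (le_abs_self _).trans hN
    have E4 : ∀ᶠ N : ℕ in Filter.atTop, C ≤ (N:ℝ) ^ (a - r - b) :=
      ((tendsto_rpow_atTop (by linarith)).comp tendsto_natCast_atTop_atTop).eventually_ge_atTop C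
    have E5 : ∀ᶠ N : ℕ in Filter.atTop, (m:ℝ) ≤ (N:ℝ) ^ (a - r) :=
      ((tendsto_rpow_atTop (by linarith)).comp tendsto_natCast_atTop_atTop).eventually_ge_atTop m
    filter_upwards [E1, E2, E3, E4, E5] with N hN3 hδc hlog hCb hm
    have hN0 : 0 < N := by omega
    have hNR : (3:ℝ) ≤ N := by exact_mod_cast hN3
    have hNpos : (0:ℝ) < N := by linarith
    have hlog1 : 1 ≤ Real.log N := by
      rw [Real.le_log_iff_exp_le (by linarith)]
      have := Real.exp_one_lt_d9
      linarith
    have hlogpos : (0:ℝ) < Real.log N := by linarith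
    set δ : ℝ := (N:ℝ) ^ (1 - 2*γ) * Real.log N ^ (-(1/2) : ℝ) with hδ_def
    have hδpos : 0 < δ :=
      mul_pos (Real.rpow_pos_of_pos hNpos _) (Real.rpow_pos_of_pos hlogpos _)
    have hfac : Real.log N ^ (-(1/2) : ℝ) ≤ 1 :=
      Real.rpow_le_one_of_one_le_of_nonpos hlog1 (by norm_num)
    have hδle : δ ≤ (N:ℝ) ^ (1 - 2*γ) := by
      rw [hδ_def]
      nlinarith [Real.rpow_pos_of_pos hNpos (1 - 2*γ),
        Real.rpow_pos_of_pos hlogpos (-(1/2) : ℝ)]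
    have hδc' : δ < min c (1 - c) := lt_of_le_of_lt hδle hδc
    have h0a : 0 ≤ c - δ := by
      have := min_le_left c (1 - c); linarith
    have hab : c - δ < c + δ := by linarith
    have hb1 : c + δ ≤ 1 := by
      have := min_le_right c (1 - c); linarith
    have key := abs_le_disc (fun n => Int.fract ((n:ℝ) ^ j * β)) N h0a hab hb1
    have hd := hbound N hN0
    have hcd : (c + δ) - (c - δ) = 2 * δ := by ring
    rw [hcd] at key
    have key2 := key.trans hd
    set cnt : ℕ := countIn (fun n => Int.fract ((n:ℝ) ^ j * β)) (c - δ) (c + δ) N with hcnt_def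
    have hlb : 2 * δ - C * (N:ℝ) ^ (-θ + ε) ≤ (cnt:ℝ) / N := by
      have h := (abs_le.1 key2).1
      linarith
    have hlb2 : (2 * δ - C * (N:ℝ) ^ (-θ + ε)) * N ≤ (cnt:ℝ) :=
      (le_div_iff₀ hNpos).1 hlb
    have hNe : (N:ℝ) * (N:ℝ) ^ (-θ + ε) = (N:ℝ) ^ b := by
      have h : (1:ℝ) + (-θ + ε) = b := by rw [hb_def]; ring
      rw [← h, Real.rpow_add hNpos 1 (-θ + ε), Real.rpow_one]
    have hNa : (N:ℝ) * (N:ℝ) ^ (1 - 2*γ) = (N:ℝ) ^ a := by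
      have h : (1:ℝ) + (1 - 2*γ) = a := by rw [ha_def]; ring
      rw [← h, Real.rpow_add hNpos 1 (1 - 2*γ), Real.rpow_one]
    have hloginv : (N:ℝ) ^ (-r) ≤ Real.log N ^ (-(1/2) : ℝ) := by
      have hsq : Real.log N ^ ((1:ℝ)/2) ≤ (N:ℝ) ^ r := by
        have h1 : Real.log N ^ ((1:ℝ)/2) ≤ ((N:ℝ) ^ (2*r)) ^ ((1:ℝ)/2) :=
          Real.rpow_le_rpow (by linarith) hlog (by norm_num)
        have h2 : ((N:ℝ) ^ (2*r)) ^ ((1:ℝ)/2) = (N:ℝ) ^ r := by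
          rw [← Real.rpow_mul hNpos.le]
          congr 1
          ring
        linarith
      rw [show (-(1/2) : ℝ) = -((1:ℝ)/2) by norm_num,
        Real.rpow_neg hNpos.le, Real.rpow_neg hlogpos.le]
      exact inv_anti₀ (Real.rpow_pos_of_pos hlogpos _) hsq
    have hterm1 : (N:ℝ) ^ (a - r) ≤ (N:ℝ) ^ a * Real.log N ^ (-(1/2) : ℝ) := by
      have h : (N:ℝ) ^ (a - r) = (N:ℝ) ^ a * (N:ℝ) ^ (-r) := by
        rw [← Real.rpow_add hNpos]; ring_nf
      rw [h]
      exact mul_le_mul_of_nonneg_left hloginv (Real.rpow_nonneg hNpos.le _)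
    have hterm2 : C * (N:ℝ) ^ b ≤ (N:ℝ) ^ (a - r) := by
      have h : (N:ℝ) ^ (a - r) = (N:ℝ) ^ (a - r - b) * (N:ℝ) ^ b := by
        rw [← Real.rpow_add hNpos]; ring_nf
      rw [h]
      exact mul_le_mul_of_nonneg_right hCb (Real.rpow_nonneg hNpos.le _)
    have hNδ : (N:ℝ) * δ = (N:ℝ) ^ a * Real.log N ^ (-(1/2) : ℝ) := by
      rw [hδ_def, ← mul_assoc, hNa]
    have hcntR : (m:ℝ) ≤ (cnt:ℝ) := by
      have hexp : (2 * δ - C * (N:ℝ) ^ (-θ + ε)) * N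
          = 2 * ((N:ℝ) * δ) - C * ((N:ℝ) * (N:ℝ) ^ (-θ + ε)) := by ring
      rw [hexp, hNδ, hNe] at hlb2
      linarith
    have hsub : {n : ℕ | 1 ≤ n ∧ n ≤ N ∧
          (fun n => Int.fract ((n:ℝ) ^ j * β)) n ∈ Set.Ico (c - δ) (c + δ)} ⊆
        {n : ℕ | 1 ≤ n ∧ n ≤ N ∧
          |c - Int.fract ((n:ℝ) ^ j * β)| ≤ δ} := by
      intro n hn
      simp only [Set.mem_setOf_eq, Set.mem_Ico] at hn ⊢
      obtain ⟨hn1, hn2, hn3, hn4⟩ := hn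
      refine ⟨hn1, hn2, ?_⟩
      rw [abs_le]
      exact ⟨by linarith, by linarith⟩
    have hmono := Nat.card_mono (finite_aux N _) hsub
    have hm' : m ≤ cnt := by exact_mod_cast hcntR
    calc m ≤ cnt := hm'
    _ ≤ _ := hmono
  · -- contradiction case: θ > 1
    push_neg at hγ
    have hθ1 : 1 < θ := by linarith
    set ε : ℝ := (θ - 1) / 2 with hε_def
    have hεpos : 0 < ε := by rw [hε_def]; linarith
    obtain ⟨C, hC, hbound⟩ := hdisc ε hεpos
    have hev : ∀ᶠ N : ℕ in Filter.atTop, 2 * C < (N:ℝ) ^ ε :=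
      ((tendsto_rpow_atTop hεpos).comp tendsto_natCast_atTop_atTop).eventually_gt_atTop (2*C)
    obtain ⟨N, hNs, hN1⟩ := (hev.and (Filter.eventually_ge_atTop 1)).exists
    have hN0 : 0 < N := hN1
    have hNpos : (0:ℝ) < N := by exact_mod_cast hN0
    have hlow := one_div_le_disc (fun n => Int.fract ((n:ℝ) ^ j * β))
      (Int.fract_nonneg _) (Int.fract_lt_one _) N hN0
    have hup := hbound N hN0
    have hcomb : 1 / (2 * (N:ℝ)) ≤ C * (N:ℝ) ^ (-θ + ε) := hlow.trans hup
    have hmul : (N:ℝ) ^ (-θ + ε) * (N:ℝ) ^ ε * (N:ℝ) = 1 := by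
      calc (N:ℝ) ^ (-θ + ε) * (N:ℝ) ^ ε * (N:ℝ)
          = (N:ℝ) ^ ((-θ + ε) + ε) * (N:ℝ) ^ (1:ℝ) := by
            rw [← Real.rpow_add hNpos, Real.rpow_one]
        _ = (N:ℝ) ^ (((-θ + ε) + ε) + 1) := (Real.rpow_add hNpos _ _).symm
        _ = (N:ℝ) ^ (0:ℝ) := by congr 1; rw [hε_def]; ring
        _ = 1 := Real.rpow_zero _
    have hvpos : (0:ℝ) < (N:ℝ) ^ ε := Real.rpow_pos_of_pos hNpos _
    have h3 := mul_le_mul_of_nonneg_right hcomb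
      (by positivity : (0:ℝ) ≤ (N:ℝ) ^ ε * (2 * N))
    have h2N : (2 * (N:ℝ)) ≠ 0 := by positivity
    have hL : 1 / (2 * (N:ℝ)) * ((N:ℝ) ^ ε * (2 * N)) = (N:ℝ) ^ ε := by
      rw [show 1 / (2 * (N:ℝ)) * ((N:ℝ) ^ ε * (2 * N))
          = (N:ℝ) ^ ε * ((2 * N) * (1 / (2 * N))) by ring, mul_one_div_cancel h2N, mul_one]
    have hR : C * (N:ℝ) ^ (-θ + ε) * ((N:ℝ) ^ ε * (2 * N)) = 2 * C := by
      rw [show C * (N:ℝ) ^ (-θ + ε) * ((N:ℝ) ^ ε * (2 * N))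
          = 2 * C * ((N:ℝ) ^ (-θ + ε) * (N:ℝ) ^ ε * (N:ℝ)) by ring, hmul]
      ring
    rw [hL, hR] at h3
    linarith
end
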